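/- arXiv:2008.09877 — 3 statements merged into one kernel-verified Lean document; each statement's English description precedes it below -/
import Mathlib

section
/- Let G be a finite undirected weighted graph on n vertices with positive edge weights, and let H be a t-light initialization of G (i.e., H contains for each vertex its t lightest incident edges, or all if degree ≤ t). Let P be a shortest path in G between u and v, and suppose ℓ edges of P are missing from H. Then there exists a set S of vertices with |S| ≥ c·t·ℓ (for an absolute constant c > 0) such that every vertex of S is joined by an edge of H of weight at most W_{u,v} to some vertex of P, where W_{u,v} is the maximum edge weight on P. -/
/-!
Number the missing edges `e₀, e₁, …` in order along `P`. Each endpoint of a missing edge `{x, y}`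
has at least `t` neighbours in `H` joined by edges no heavier than `{x, y}`. Between `eₖ` and
`eₖ₊₁` pick the endpoint of the lighter of the two (after the last missing edge, its far endpoint):
its light neighbours form a set `Sₖ` joined by edges no heavier than `eₖ` and `eₖ₊₁`. If `Sₖ` and
`Sₖ'` with `k + 3 ≤ k'` shared a vertex `z`, the two-edge detour through `z` would weigh at most
`w eₖ₊₁ + w eₖ'` while bypassing `eₖ₊₁`, `eₖ₊₂` and `eₖ'`, which is impossible on a shortest path
with positive weights. So `S₀, S₃, S₆, …` are `⌈ℓ / 3⌉` disjoint sets of size at least `t`.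
-/

open Finset SimpleGraph
open scoped Classical

namespace AddSpanner

/-- Total weight of a walk. -/
noncomputable def walkWeight {V : Type} (w : V → V → ℝ) {G : SimpleGraph V} :
    ∀ {u v : V}, G.Walk u v → ℝ
  | _, _, .nil => 0
  | u, _, .cons (v := x) _ q => w u x + walkWeight w q

/-- Maximum edge weight along a walk (0 for the trivial walk). -/
noncomputable def walkMaxW {V : Type} (w : V → V → ℝ) {G : SimpleGraph V} {u v : V}
    (p : G.Walk u v) : ℝ :=
  (p.darts.map fun d => w d.toProd.1 d.toProd.2).foldr max 0

/-- Weighted shortest-path distance (infimum over all walk weights). -/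
noncomputable def wdist {V : Type} (G : SimpleGraph V) (w : V → V → ℝ) (u v : V) : ℝ :=
  sInf {x | ∃ p : G.Walk u v, walkWeight w p = x}

/-- A walk is a shortest path if it is a path whose weight realizes the distance. -/
def IsShortestPath {V : Type} (G : SimpleGraph V) (w : V → V → ℝ) {u v : V}
    (p : G.Walk u v) : Prop :=
  p.IsPath ∧ walkWeight w p = wdist G w u v

/-- Number of `H`-neighbors of `x` reachable by an edge no heavier than the edge `{x,y}`. -/
noncomputable def lightDeg {V : Type} [Fintype V] (H : SimpleGraph V) (w : V → V → ℝ)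
    (x y : V) : ℕ :=
  (Finset.univ.filter fun z => H.Adj x z ∧ w x z ≤ w x y).card

/-- `H` is a `t`-light initialization of `G`: it is a subgraph which, for every vertex,
contains its `t` lightest incident edges (all of them if the degree is at most `t`);
equivalently, whenever an edge `{x,y}` of `G` is missing from `H`, vertex `x` already has at
least `t` incident `H`-edges of weight at most `w x y`. -/
def LightInit {V : Type} [Fintype V] (G H : SimpleGraph V) (w : V → V → ℝ) (t : ℝ) : Prop :=
  H ≤ G ∧ ∀ x y, G.Adj x y → ¬ H.Adj x y → t ≤ (lightDeg H w x y : ℝ)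

/-- Number of edges of a graph. -/
noncomputable def numEdges {V : Type} (H : SimpleGraph V) : ℕ :=
  Nat.card H.edgeSet

lemma le_card_biUnion {ι α : Type*} [DecidableEq α] {s : Finset ι} {f : ι → Finset α} {t : ℝ}
    (hf : (s : Set ι).PairwiseDisjoint f) (ht : ∀ i ∈ s, t ≤ #(f i)) :
    #s * t ≤ #(s.biUnion f) := by
  rw [card_biUnion hf, Nat.cast_sum]
  simpa using card_nsmul_le_sum s _ t ht

section WalkWeight

variable {V : Type} {G : SimpleGraph V} {w : V → V → ℝ} {u v : V}

def stepWeight (w : V → V → ℝ) (p : G.Walk u v) (i : ℕ) : ℝ :=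
  w (p.getVert i) (p.getVert (i + 1))

@[simp]
lemma walkWeight_copy {u' v' : V} (p : G.Walk u v) (hu : u = u') (hv : v = v') :
    walkWeight w (p.copy hu hv) = walkWeight w p := by
  subst hu hv; rfl

lemma walkWeight_append {x : V} (p : G.Walk u x) (q : G.Walk x v) :
    walkWeight w (p.append q) = walkWeight w p + walkWeight w q := by
  induction p with
  | nil => simp [walkWeight]
  | cons _ _ ih => simp only [Walk.cons_append, walkWeight, ih]; ring

lemma walkWeight_nonneg (hw : ∀ x y, G.Adj x y → 0 ≤ w x y) (p : G.Walk u v) :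
    0 ≤ walkWeight w p := by
  induction p with
  | nil => exact le_rfl
  | cons h _ ih => exact add_nonneg (hw _ _ h) ih

lemma wdist_le_walkWeight (hw : ∀ x y, G.Adj x y → 0 ≤ w x y) (p : G.Walk u v) :
    wdist G w u v ≤ walkWeight w p :=
  csInf_le ⟨0, by rintro _ ⟨q, rfl⟩; exact walkWeight_nonneg hw q⟩ ⟨p, rfl⟩

lemma walkWeight_take (p : G.Walk u v) {n : ℕ} (hn : n ≤ p.length) :
    walkWeight w (p.take n) = ∑ i ∈ range n, stepWeight w p i := by
  induction p generalizing n with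
  | nil =>
    obtain rfl : n = 0 := Nat.le_zero.1 hn
    simp [walkWeight]
  | cons h q ih =>
    cases n with
    | zero => simp [walkWeight]
    | succ n =>
      rw [Walk.length_cons, Nat.add_le_add_iff_right] at hn
      simp only [Walk.take, walkWeight, ih hn, sum_range_succ', stepWeight, Walk.getVert_cons_succ,
        Walk.getVert_zero]
      ring

lemma le_foldr_max_of_mem {α : Type*} [LinearOrder α] {a : α} {l : List α} (h : a ∈ l) (b : α) :
    a ≤ l.foldr max b := by
  induction l with
  | nil => simp at h
  | cons c l ih =>
    rcases List.mem_cons.1 h with rfl | h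
    · exact le_max_left _ _
    · exact (ih h).trans (le_max_right _ _)

lemma stepWeight_le_walkMaxW (p : G.Walk u v) {i : ℕ} (hi : i < p.length) :
    stepWeight w p i ≤ walkMaxW w p :=
  le_foldr_max_of_mem (List.mem_map.2 ⟨_, List.getElem_mem (by simpa using hi),
    by simp [Walk.darts_getElem_eq_getVert, stepWeight]⟩) 0

end WalkWeight

section ShortestPath

variable {V : Type} {G : SimpleGraph V} {w : V → V → ℝ} {u v : V} {p : G.Walk u v}

lemma IsShortestPath.sum_Ico_le_walkWeight (hw : ∀ x y, G.Adj x y → 0 ≤ w x y)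
    (hp : IsShortestPath G w p) {l r : ℕ} (hlr : l ≤ r) (hr : r ≤ p.length)
    (q : G.Walk (p.getVert l) (p.getVert r)) :
    ∑ i ∈ Ico l r, stepWeight w p i ≤ walkWeight w q := by
  have hdetour := wdist_le_walkWeight hw ((p.take l).append (q.append (p.drop r)))
  have hsplit := congrArg (walkWeight w) (p.append_take_drop_eq r)
  rw [← hp.2] at hdetour
  simp only [walkWeight_append, walkWeight_take p (hlr.trans hr), walkWeight_take p hr]
    at hdetour hsplit
  rw [sum_Ico_eq_sub _ hlr]
  linarith

/-- The detour skips step `j` as well, whose weight is positive. -/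
lemma IsShortestPath.stepWeight_add_lt_walkWeight (hw : ∀ x y, G.Adj x y → 0 < w x y)
    (hp : IsShortestPath G w p) {l i j k r : ℕ} (hli : l ≤ i) (hij : i < j) (hjk : j < k)
    (hkr : k < r) (hr : r ≤ p.length) (q : G.Walk (p.getVert l) (p.getVert r)) :
    stepWeight w p i + stepWeight w p k < walkWeight w q := by
  have hstep : ∀ n < p.length, 0 < stepWeight w p n := fun n hn ↦ hw _ _ (p.adj_getVert_succ hn)
  calc stepWeight w p i + stepWeight w p k
      < ∑ n ∈ {i, j, k}, stepWeight w p n := by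
        rw [sum_insert (by simp only [mem_insert, mem_singleton]; omega), sum_pair (by omega)]
        linarith [hstep j (by omega)]
    _ ≤ ∑ n ∈ Ico l r, stepWeight w p n :=
        sum_le_sum_of_subset_of_nonneg
          (by intro n; simp only [mem_insert, mem_singleton, mem_Ico]; omega)
          fun n hn _ ↦ (hstep n (by simp only [mem_Ico] at hn; omega)).le
    _ ≤ walkWeight w q := hp.sum_Ico_le_walkWeight (fun x y h ↦ (hw x y h).le) (by omega) hr q

end ShortestPath

section LightAttachment

variable {V : Type} {G H : SimpleGraph V} {w : V → V → ℝ} {t : ℝ} {u v : V}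

lemma LightInit.exists_lightNbrs [Fintype V] (hinit : LightInit G H w t) {x y : V}
    (hG : G.Adj x y) (hH : ¬H.Adj x y) :
    ∃ A : Finset V, t ≤ #A ∧ ∀ z ∈ A, H.Adj x z ∧ w x z ≤ w x y :=
  ⟨_, hinit.2 x y hG hH, fun _ hz ↦ (mem_filter.1 hz).2⟩

/-- When `i` is the last missing step, `j` lies past the end of `p`, hence the bound by step `j`
is conditional. -/
structure IsLightAttachment (H : SimpleGraph V) (w : V → V → ℝ) (p : G.Walk u v) (t : ℝ)
    (i j a : ℕ) (A : Finset V) : Prop where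
  lt_pos : i < a
  pos_le : a ≤ j
  pos_le_length : a ≤ p.length
  le_card : t ≤ #A
  adj : ∀ z ∈ A, H.Adj (p.getVert a) z
  weight_le_left : ∀ z ∈ A, w (p.getVert a) z ≤ stepWeight w p i
  weight_le_right : j < p.length → ∀ z ∈ A, w (p.getVert a) z ≤ stepWeight w p j

/-- Attach at the endpoint, between the two steps, of the lighter of the two. -/
lemma LightInit.exists_isLightAttachment [Fintype V] (hsym : ∀ x y, w x y = w y x)
    (hinit : LightInit G H w t) (p : G.Walk u v) {i j : ℕ} (hi : i < p.length)
    (hHi : ¬H.Adj (p.getVert i) (p.getVert (i + 1))) (hij : i < j)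
    (hHj : ¬H.Adj (p.getVert j) (p.getVert (j + 1))) :
    ∃ a A, IsLightAttachment H w p t i j a A := by
  by_cases hj : j < p.length ∧ stepWeight w p j ≤ stepWeight w p i
  · obtain ⟨A, hcard, hA⟩ := hinit.exists_lightNbrs (p.adj_getVert_succ hj.1) hHj
    exact ⟨j, A, hij, le_rfl, hj.1.le, hcard, fun z hz ↦ (hA z hz).1,
      fun z hz ↦ (hA z hz).2.trans hj.2, fun _ z hz ↦ (hA z hz).2⟩
  · obtain ⟨A, hcard, hA⟩ :=
      hinit.exists_lightNbrs (p.adj_getVert_succ hi).symm fun h ↦ hHi h.symm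
    have hleft : ∀ z ∈ A, w (p.getVert (i + 1)) z ≤ stepWeight w p i :=
      fun z hz ↦ (hA z hz).2.trans_eq (hsym _ _)
    refine ⟨i + 1, A, i.lt_succ_self, hij, hi, hcard, fun z hz ↦ (hA z hz).1, hleft,
      fun hjl z hz ↦ (hleft z hz).trans ?_⟩
    exact (not_le.1 fun h ↦ hj ⟨hjl, h⟩).le

variable {p : G.Walk u v} {i j a : ℕ} {A : Finset V}

lemma IsLightAttachment.exists_adj_weight_le_walkMaxW (hsym : ∀ x y, w x y = w y x)
    (h : IsLightAttachment H w p t i j a A) {z : V} (hz : z ∈ A) :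
    ∃ x ∈ p.support, H.Adj z x ∧ w z x ≤ walkMaxW w p :=
  ⟨p.getVert a, p.getVert_mem_support a, (h.adj z hz).symm, (hsym z _).trans_le <|
    (h.weight_le_left z hz).trans <| stepWeight_le_walkMaxW p <| h.lt_pos.trans_le h.pos_le_length⟩

/-- A common vertex `z` would give a two-edge detour from `a` to `b`, no heavier than steps `j`
and `i'`, around the three steps `j < m < i'` of the shortest path. -/
lemma IsLightAttachment.disjoint (hw : ∀ x y, G.Adj x y → 0 < w x y)
    (hsym : ∀ x y, w x y = w y x) (hHG : H ≤ G) (hp : IsShortestPath G w p)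
    (hA : IsLightAttachment H w p t i j a A) {i' j' b : ℕ} {B : Finset V}
    (hB : IsLightAttachment H w p t i' j' b B) {m : ℕ} (hjm : j < m) (hmi : m < i') :
    Disjoint A B := by
  refine disjoint_left.2 fun z hzA hzB ↦ ?_
  have hdetour := hp.stepWeight_add_lt_walkWeight hw hA.pos_le hjm hmi hB.lt_pos
    hB.pos_le_length (.cons (hHG (hA.adj z hzA)) (.cons (hHG (hB.adj z hzB)).symm .nil))
  have hzj := hA.weight_le_right (by linarith [hB.lt_pos, hB.pos_le_length]) z hzA
  have hzi' := hB.weight_le_left z hzB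
  simp only [walkWeight, add_zero, hsym z] at hdetour
  linarith

end LightAttachment

section MissingSteps

variable {V : Type} {G H : SimpleGraph V} {w : V → V → ℝ} {t : ℝ} {u v : V}

/-- Every `i ≥ p.length` is a missing step too (it is a loop at `v`), so the missing steps form
an infinite set and `Nat.nth (IsMissingStep H p)` enumerates them strictly increasingly. -/
def IsMissingStep (H : SimpleGraph V) (p : G.Walk u v) (i : ℕ) : Prop :=
  ¬H.Adj (p.getVert i) (p.getVert (i + 1))

lemma length_filter_edges_notMem_edgeSet (H : SimpleGraph V) (p : G.Walk u v) :
    (p.edges.filter fun e ↦ e ∉ H.edgeSet).length = Nat.count (IsMissingStep H p) p.length := by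
  have hedges : p.edges = (List.range p.length).map fun i ↦ s(p.getVert i, p.getVert (i + 1)) :=
    List.ext_getElem (by simp) fun n _ _ ↦ by simp [Walk.getElem_edges]
  rw [hedges, List.filter_map, List.length_map, Nat.count, List.countP_eq_length_filter]
  congr! with i
  exact decide_eq_decide.2 Iff.rfl

lemma infinite_setOf_isMissingStep (H : SimpleGraph V) (p : G.Walk u v) :
    {i | IsMissingStep H p i}.Infinite :=
  Set.infinite_of_forall_exists_gt fun n ↦ ⟨n + p.length + 1, by
    rw [Set.mem_ofPred_eq, IsMissingStep, p.getVert_of_length_le (by omega),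
      p.getVert_of_length_le (by omega)]
    exact H.irrefl, by omega⟩

lemma LightInit.exists_isLightAttachment_nth [Fintype V] (hsym : ∀ x y, w x y = w y x)
    (hinit : LightInit G H w t) (p : G.Walk u v) :
    ∃ (a : ℕ → ℕ) (A : ℕ → Finset V), ∀ k < Nat.count (IsMissingStep H p) p.length,
      IsLightAttachment H w p t (Nat.nth (IsMissingStep H p) k)
        (Nat.nth (IsMissingStep H p) (k + 1)) (a k) (A k) := by
  have hinf := infinite_setOf_isMissingStep H p
  have hatt : ∀ k, ∃ a A, k < Nat.count (IsMissingStep H p) p.length →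
      IsLightAttachment H w p t (Nat.nth (IsMissingStep H p) k)
        (Nat.nth (IsMissingStep H p) (k + 1)) a A := by
    intro k
    by_cases hk : k < Nat.count (IsMissingStep H p) p.length
    · obtain ⟨a, A, h⟩ := hinit.exists_isLightAttachment hsym p (Nat.nth_lt_of_lt_count hk)
        (Nat.nth_mem_of_infinite hinf k) (Nat.nth_strictMono hinf k.lt_succ_self)
        (Nat.nth_mem_of_infinite hinf (k + 1))
      exact ⟨a, A, fun _ ↦ h⟩
    · exact ⟨0, ∅, fun h ↦ absurd h hk⟩
  choose a A hA using hatt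
  exact ⟨a, A, hA⟩

end MissingSteps

end AddSpanner

open AddSpanner in
/-- if `ℓ` edges of a shortest path are missing from a `t`-light initialization
`H`, then some set `S` of at least `c·t·ℓ` vertices is joined by `H`-edges of weight at most
`W_{u,v}` to vertices of the path. -/
theorem lots_of_light_neighbors :
    ∃ c : ℝ, 0 < c ∧
      ∀ (V : Type) [Fintype V] [DecidableEq V] (G H : SimpleGraph V) (w : V → V → ℝ),
        (∀ x y, G.Adj x y → 0 < w x y) → (∀ x y, w x y = w y x) →
        ∀ (t : ℝ), 0 < t → LightInit G H w t →
        ∀ (u v : V) (p : G.Walk u v), IsShortestPath G w p →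
        ∀ ℓ : ℕ, ℓ = (p.edges.filter fun e => e ∉ H.edgeSet).length →
        ∃ S : Finset V, c * t * ℓ ≤ S.card ∧
          ∀ s ∈ S, ∃ x ∈ p.support, H.Adj s x ∧ w s x ≤ walkMaxW w p := by
  refine ⟨1 / 3, by norm_num, ?_⟩
  intro V _ _ G H w hw hsym t ht hinit u v p hp ℓ hℓ
  rw [length_filter_edges_notMem_edgeSet] at hℓ
  obtain ⟨a, A, hA⟩ := hinit.exists_isLightAttachment_nth hsym p
  have hmono := Nat.nth_strictMono (infinite_setOf_isMissingStep H p)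
  have hdisj : ∀ k k', k + 3 ≤ k' → k' < ℓ → Disjoint (A k) (A k') := fun k k' hkk' hk' ↦
    (hA k (by omega)).disjoint hw hsym hinit.1 hp (hA k' (by omega))
      (hmono (by omega : k + 1 < k + 2)) (hmono (by omega : k + 2 < k'))
  have hdisj3 : ((range ((ℓ + 2) / 3) : Finset ℕ) : Set ℕ).PairwiseDisjoint fun i ↦ A (3 * i) := by
    intro i hi i' hi' hne
    simp only [coe_range, Set.mem_Iio] at hi hi'
    rcases hne.lt_or_gt with h | h
    · exact hdisj _ _ (by omega) (by omega)
    · exact (hdisj _ _ (by omega) (by omega)).symm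
  refine ⟨(range ((ℓ + 2) / 3)).biUnion fun i ↦ A (3 * i), ?_, ?_⟩
  · have hℓ3 : (ℓ : ℝ) ≤ 3 * ((ℓ + 2) / 3 : ℕ) := by
      exact_mod_cast (by omega : ℓ ≤ 3 * ((ℓ + 2) / 3))
    calc 1 / 3 * t * ℓ ≤ #(range ((ℓ + 2) / 3)) * t := by rw [card_range]; nlinarith
      _ ≤ _ := le_card_biUnion hdisj3 fun i hi ↦
        (hA _ (by simp only [mem_range] at hi; omega)).le_card
  · simp only [mem_biUnion]
    rintro s ⟨i, hi, hs⟩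
    exact (hA _ (by simp only [mem_range] at hi; omega)).exists_adj_weight_le_walkMaxW hsym hs
end

section
/- Let G be a weighted undirected graph on n vertices and let H be a (2·n^ε·ln n)-light initialization of G, for 0 ≤ ε ≤ 1. Let S ⊆ V be formed by including each vertex independently with probability n^{-ε}. Then with probability at least 1 − 1/n, every vertex u with at least 2·n^ε·ln n neighbors in G has some (2·n^ε·ln n)-light neighbor belonging to S. -/
open Finset SimpleGraph
open scoped Classical

/-! A vertex `u` of degree at least `t = 2 n^ε ln n` has at least `t` light neighbours: either
every edge at `u` is light, or a missing edge certifies `t` lighter ones. All of them avoid `S`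
with probability at most `(1 - n^{-ε})^t ≤ exp (-t n^{-ε}) = n^{-2}`, and a union bound over
the `n` vertices leaves a failure probability of at most `1/n`. -/

open AddSpanner MeasureTheory
open scoped ENNReal

theorem AddSpanner.LightInit.le_degree {V : Type} [Fintype V] {G H : SimpleGraph V}
    {w : V → V → ℝ} {t : ℝ} (hH : LightInit G H w t) {u : V} (hu : t ≤ G.degree u) :
    t ≤ H.degree u := by
  by_cases hmissing : ∃ y, G.Adj u y ∧ ¬ H.Adj u y
  · obtain ⟨y, hGy, hHy⟩ := hmissing
    refine (hH.2 u y hGy hHy).trans ?_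
    exact_mod_cast card_le_card fun z hz => by simpa using (mem_filter.1 hz).2.1
  · refine hu.trans ?_
    exact_mod_cast card_le_card fun y hy => by
      simp only [mem_neighborFinset] at hy ⊢
      exact not_not.1 fun h => hmissing ⟨y, hy, h⟩

theorem measure_pi_forall_mem_eq_pow {ι α : Type*} [Fintype ι] [MeasurableSpace α]
    (ν : Measure α) [IsProbabilityMeasure ν] (s : Finset ι) (A : Set α) :
    Measure.pi (fun _ : ι => ν) {f | ∀ i ∈ s, f i ∈ A} = ν A ^ #s := by
  have hpi : {f : ι → α | ∀ i ∈ s, f i ∈ A} =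
      Set.univ.pi fun i => if i ∈ s then A else .univ := by
    ext f; simp only [Set.mem_ofPred_eq, Set.mem_pi, Set.mem_univ, true_implies]
    exact forall_congr' fun i => by split_ifs <;> simp_all
  rw [hpi, Measure.pi_pi]
  simp only [apply_ite ν, measure_univ, Fintype.prod_ite_mem, prod_const]

theorem one_sub_card_mul_le_measure_forall {Ω ι : Type*} [MeasurableSpace Ω] [Fintype ι]
    (μ : Measure Ω) [IsProbabilityMeasure μ] (P : ι → Ω → Prop) {δ : ℝ≥0∞}
    (h : ∀ i, μ {ω | ¬ P i ω} ≤ δ) :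
    1 - Fintype.card ι * δ ≤ μ {ω | ∀ i, P i ω} := by
  have hbad : μ {ω | ∀ i, P i ω}ᶜ ≤ Fintype.card ι * δ :=
    calc μ {ω | ∀ i, P i ω}ᶜ = μ (⋃ i, {ω | ¬ P i ω}) := by congr 1; ext; simp
      _ ≤ ∑ i, μ {ω | ¬ P i ω} := measure_iUnion_fintype_le μ _
      _ ≤ ∑ _ : ι, δ := sum_le_sum fun i _ => h i
      _ = Fintype.card ι * δ := by simp
  rw [tsub_le_iff_right]
  calc 1 = μ Set.univ := measure_univ.symm
    _ ≤ μ {ω | ∀ i, P i ω} + μ {ω | ∀ i, P i ω}ᶜ := measure_univ_le_add_compl _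
    _ ≤ _ := by gcongr

theorem one_sub_pow_le_exp_neg_of_le_mul {r c : ℝ} {d : ℕ} (hr : r ≤ 1) (hc : c ≤ d * r) :
    (1 - r) ^ d ≤ Real.exp (-c) :=
  calc (1 - r) ^ d ≤ Real.exp (-r) ^ d :=
        pow_le_pow_left₀ (by linarith) (Real.one_sub_le_exp_neg r) d
    _ = Real.exp (-(d * r)) := by rw [← Real.exp_nat_mul]; ring_nf
    _ ≤ Real.exp (-c) := Real.exp_le_exp.2 (by linarith)

theorem one_sub_ofReal_pow_le_inv_sq {n : ℕ} (hn : 1 ≤ n) {r : ℝ} (hr0 : 0 ≤ r)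
    (hr1 : r ≤ 1) {d : ℕ} (hd : 2 * Real.log n ≤ d * r) :
    (1 - ENNReal.ofReal r) ^ d ≤ (n : ℝ≥0∞)⁻¹ ^ 2 := by
  have hn0 : (0 : ℝ) < n := by exact_mod_cast hn
  have hexp : Real.exp (-(2 * Real.log n)) = (n : ℝ)⁻¹ ^ 2 := by
    rw [Real.exp_neg, inv_pow, ← Real.exp_log (pow_pos hn0 2), Real.log_pow]; norm_num
  calc (1 - ENNReal.ofReal r) ^ d = ENNReal.ofReal ((1 - r) ^ d) := by
        rw [← ENNReal.ofReal_one, ← ENNReal.ofReal_sub _ hr0, ENNReal.ofReal_pow (by linarith)]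
    _ ≤ ENNReal.ofReal ((n : ℝ)⁻¹ ^ 2) :=
        ENNReal.ofReal_le_ofReal (hexp ▸ one_sub_pow_le_exp_neg_of_le_mul hr1 hd)
    _ = (n : ℝ≥0∞)⁻¹ ^ 2 := by
        rw [ENNReal.ofReal_pow (by positivity), ENNReal.ofReal_inv_of_pos hn0,
          ENNReal.ofReal_natCast]

open scoped NNReal ENNReal in
/-- sampling each vertex independently with probability `n^{-ε}`, with probability
at least `1 - 1/n` every vertex of degree at least `2 n^ε ln n` has a sampled
`(2 n^ε ln n)`-light neighbor. -/
theorem light_dominating_set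
    (V : Type) [Fintype V] (n : ℕ) (hn : n = Fintype.card V) (hn1 : 1 ≤ n)
    (ε : ℝ)
    (G H : SimpleGraph V) (w : V → V → ℝ)
    (hH : LightInit G H w (2 * (n : ℝ) ^ ε * Real.log n))
    (p : ℝ≥0∞) (hp : p = ENNReal.ofReal ((n : ℝ) ^ (-ε))) (hp1 : p ≤ 1) :
    1 - (1 : ℝ≥0∞) / n ≤
      (Measure.pi fun _ : V => (PMF.ofFintype (fun b => cond b p (1 - p)) (by simp [hp1])).toMeasure)
        {f : V → Bool |
          ∀ u : V, 2 * (n : ℝ) ^ ε * Real.log n ≤ G.degree u →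
            ∃ y : V, H.Adj u y ∧ f y = true} := by
  set t := 2 * (n : ℝ) ^ ε * Real.log n
  set r := (n : ℝ) ^ (-ε)
  set ν := (PMF.ofFintype (fun b => cond b p (1 - p)) (by simp [hp1])).toMeasure
  have hn0 : (0 : ℝ) < n := by exact_mod_cast hn1
  have hr0 : 0 ≤ r := by positivity
  have hr1 : r ≤ 1 := ENNReal.ofReal_le_one.1 (hp ▸ hp1)
  have htr : t * r = 2 * Real.log n := by
    rw [mul_right_comm, mul_assoc 2, ← Real.rpow_add hn0, add_neg_cancel, Real.rpow_zero, mul_one]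
  have hν : ν {false} = 1 - p := by
    simp [ν, PMF.toMeasure_apply_singleton _ _ (measurableSet_singleton _)]
  have hmiss : ∀ u, Measure.pi (fun _ : V => ν)
      {f | ¬ (t ≤ G.degree u → ∃ y, H.Adj u y ∧ f y = true)} ≤ (n : ℝ≥0∞)⁻¹ ^ 2 := by
    intro u
    by_cases hu : t ≤ G.degree u
    · calc _ ≤ Measure.pi (fun _ : V => ν)
              {f | ∀ y ∈ H.neighborFinset u, f y ∈ ({false} : Set Bool)} :=
            measure_mono fun f hf => by simpa [hu] using hf
        _ = (1 - p) ^ H.degree u := by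
            rw [measure_pi_forall_mem_eq_pow, hν, card_neighborFinset_eq_degree]
        _ ≤ _ := hp ▸ one_sub_ofReal_pow_le_inv_sq hn1 hr0 hr1
            (htr ▸ mul_le_mul_of_nonneg_right (hH.le_degree hu) hr0)
    · simp [hu]
  have hne : (n : ℝ≥0∞) ≠ 0 := by exact_mod_cast (by omega : n ≠ 0)
  calc 1 - (1 : ℝ≥0∞) / n = 1 - Fintype.card V * (n : ℝ≥0∞)⁻¹ ^ 2 := by
        rw [← hn, sq, ← mul_assoc, ENNReal.mul_inv_cancel hne (ENNReal.natCast_ne_top n),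
          one_mul, one_div]
    _ ≤ _ := one_sub_card_mul_le_measure_forall _ _ hmiss
end

section
/- Let X be a random variable counting, with parameter p ∈ (0,1], the position of the first success in independent Bernoulli(p) trials truncated at m trials. If Bunch(v) consists of the edges incident to v strictly lighter than the edge to the nearest sampled vertex (where each vertex is sampled independently with probability p), then |Bunch(v)| is stochastically dominated by a geometric random variable with parameter p, hence E[|Bunch(v)|] ≤ 1/p, and with probability at least 1 − n^{−c}, |Bunch(v)| ≤ (c/p)·ln n. -/
open Finset SimpleGraph
open scoped Classical

/-! If the bunch has at least `k` edges, none of the `k` lightest neighbours is sampled, an event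
of probability `(1 - p)^k`. Summing these tails bounds the expectation by `∑ (1 - p)^k = 1/p`,
and `(1 - p)^k ≤ e^{-pk}` at `k = ⌈(c/p) ln n⌉` gives the tail `n^{-c}`. -/

open MeasureTheory

open scoped ENNReal NNReal

section GeometricTail

theorem tsum_indicator_lt_eq {Ω : Type*} (X : Ω → ℕ) (ω : Ω) :
    ∑' k : ℕ, {ω | k < X ω}.indicator (fun _ => 1) ω = (X ω : ℝ≥0∞) := by
  rw [tsum_eq_sum (s := Finset.range (X ω)) fun k hk => by simp_all]
  simp [Set.indicator_apply, Finset.filter_true_of_mem fun _ => Finset.mem_range.1]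

variable {Ω : Type*} [MeasurableSpace Ω] {μ : Measure Ω} {X : Ω → ℕ} {p : ℝ≥0∞}

theorem lintegral_natCast_eq_tsum_measure_lt (hX : Measurable X) :
    ∫⁻ ω, (X ω : ℝ≥0∞) ∂μ = ∑' k : ℕ, μ {ω | k < X ω} := by
  have hmeas (k : ℕ) : MeasurableSet {ω | k < X ω} := measurableSet_lt measurable_const hX
  simp_rw [← tsum_indicator_lt_eq X]
  rw [lintegral_tsum fun k => (measurable_const.indicator (hmeas k)).aemeasurable]
  simp [lintegral_indicator_const (hmeas _)]

theorem lintegral_natCast_le_inv_of_tail_le_geometric (hX : Measurable X) (hp : p ≤ 1)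
    (htail : ∀ k : ℕ, μ {ω | k ≤ X ω} ≤ (1 - p) ^ k) :
    ∫⁻ ω, (X ω : ℝ≥0∞) ∂μ ≤ p⁻¹ :=
  calc ∫⁻ ω, (X ω : ℝ≥0∞) ∂μ = ∑' k : ℕ, μ {ω | k < X ω} :=
        lintegral_natCast_eq_tsum_measure_lt hX
    _ ≤ ∑' k : ℕ, (1 - p) ^ k :=
        ENNReal.tsum_le_tsum fun k =>
          (measure_mono (Set.setOf_subset_setOf.2 fun _ => le_of_lt)).trans (htail k)
    _ = p⁻¹ := by rw [ENNReal.tsum_geometric, ENNReal.sub_sub_cancel ENNReal.one_ne_top hp]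

theorem one_sub_pow_le_ofReal_exp (hp : p ≤ 1) (k : ℕ) :
    (1 - p) ^ k ≤ ENNReal.ofReal (Real.exp (-(p.toReal * k))) := by
  have hp_ne_top : p ≠ ∞ := ne_top_of_le_ne_top ENNReal.one_ne_top hp
  calc (1 - p) ^ k = ENNReal.ofReal (1 - p.toReal) ^ k := by
        rw [ENNReal.ofReal_sub _ ENNReal.toReal_nonneg, ENNReal.ofReal_one,
          ENNReal.ofReal_toReal hp_ne_top]
    _ ≤ ENNReal.ofReal (Real.exp (-p.toReal)) ^ k := by
        gcongr; exact Real.one_sub_le_exp_neg _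
    _ = ENNReal.ofReal (Real.exp (-(p.toReal * k))) := by
        rw [← ENNReal.ofReal_pow (Real.exp_nonneg _), ← Real.exp_nat_mul]
        ring_nf

theorem measure_le_le_ofReal_exp_of_tail_le_geometric (hp : p ≤ 1)
    (htail : ∀ k : ℕ, μ {ω | k ≤ X ω} ≤ (1 - p) ^ k) (T : ℝ) :
    μ {ω | T ≤ X ω} ≤ ENNReal.ofReal (Real.exp (-(p.toReal * T))) :=
  calc μ {ω | T ≤ X ω} = μ {ω | ⌈T⌉₊ ≤ X ω} := by simp_rw [Nat.ceil_le]
    _ ≤ (1 - p) ^ ⌈T⌉₊ := htail _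
    _ ≤ ENNReal.ofReal (Real.exp (-(p.toReal * ⌈T⌉₊))) := one_sub_pow_le_ofReal_exp hp _
    _ ≤ ENNReal.ofReal (Real.exp (-(p.toReal * T))) := by
        gcongr; exact Nat.le_ceil T

theorem ENNReal.ofReal_exp_neg_mul_log {x : ℝ} (hx : 0 < x) (c : ℝ) :
    ENNReal.ofReal (Real.exp (-(c * Real.log x))) = ENNReal.ofReal x ^ (-c) := by
  rw [ENNReal.ofReal_rpow_of_pos hx, Real.rpow_def_of_pos hx]
  ring_nf

end GeometricTail

namespace AddSpanner

variable {m : ℕ} {ws : Fin m → ℝ}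

noncomputable def bunch (ws : Fin m → ℝ) (f : Fin m → Bool) : Finset (Fin m) :=
  Finset.univ.filter fun k : Fin m => ∀ l : Fin m, f l = true → ws k < ws l

theorem card_bunch_le (ws : Fin m → ℝ) (f : Fin m → Bool) : #(bunch ws f) ≤ m :=
  (card_filter_le _ _).trans_eq (card_fin m)

theorem card_bunch_le_of_sampled (hws : Monotone ws) {f : Fin m → Bool} {i : Fin m}
    (hi : f i = true) : #(bunch ws f) ≤ i := by
  have hsub : bunch ws f ⊆ Finset.Iio i := fun k hk => by
    simp only [bunch, mem_filter, mem_univ, true_and] at hk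
    exact Finset.mem_Iio.2 (hws.reflect_lt (hk i hi))
  simpa using card_le_card hsub

theorem bernoulli_toMeasure_false (r : ℝ≥0) (hr : r ≤ 1) :
    (PMF.bernoulli r hr).toMeasure {false} = 1 - r := by
  rw [PMF.toMeasure_apply_singleton _ _ (measurableSet_singleton _), PMF.bernoulli_apply]
  simp [ENNReal.coe_sub]

theorem pi_bernoulli_le_card_bunch_le (hws : Monotone ws) (r : ℝ≥0) (hr : r ≤ 1) (k : ℕ) :
    Measure.pi (fun _ : Fin m => (PMF.bernoulli r hr).toMeasure) {f | k ≤ #(bunch ws f)} ≤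
      (1 - r) ^ k := by
  rcases le_or_gt k m with hk | hk
  · set unsampled : Finset (Fin m) := univ.filter fun i : Fin m => (i : ℕ) < k
    have hsub : {f | k ≤ #(bunch ws f)} ⊆ (unsampled : Set (Fin m)).pi fun _ => {false} :=
      fun f hf i hi => by
        simp only [Set.mem_setOf_eq, unsampled, coe_filter, mem_univ, true_and] at hf hi
        by_contra hfi
        have := card_bunch_le_of_sampled hws (Bool.not_eq_false _ ▸ hfi)
        omega
    calc _ ≤ _ := measure_mono hsub
      _ = (1 - r) ^ k := by
        rw [Measure.pi_pi_finset, prod_const, bernoulli_toMeasure_false, Fin.card_filter_val_lt,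
          min_eq_right hk]
  · have hempty : {f | k ≤ #(bunch ws f)} = ∅ :=
      Set.eq_empty_of_forall_notMem fun f hf => by
        have := card_bunch_le ws f
        simp only [Set.mem_setOf_eq] at hf
        omega
    simp [hempty]

end AddSpanner

open AddSpanner MeasureTheory
open scoped ENNReal in
/-- the bunch of a vertex — the set of its incident edges strictly lighter than
the edge to the nearest sampled vertex, the `m` incident edges being sorted by nondecreasing
weight `ws` and each neighbor sampled independently with probability `p` — is stochastically
dominated by a geometric random variable with parameter `p`; hence its expected size is at most
`1/p`, and with probability at least `1 - n^{-c}` its size is at most `(c/p)·ln n`. -/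
theorem bunch_size_geometric
    (n m : ℕ) (hn : 2 ≤ n) (c : ℝ)
    (p : ℝ≥0∞) (hp0 : 0 < p) (hp1 : p ≤ 1)
    (ws : Fin m → ℝ) (hws : Monotone ws)
    (bunchCard : (Fin m → Bool) → ℕ)
    (hbunch : ∀ f, bunchCard f =
      (Finset.univ.filter fun k : Fin m => ∀ l : Fin m, f l = true → ws k < ws l).card)
    (μ : Measure (Fin m → Bool))
    (hμ : μ = Measure.pi fun _ : Fin m => (PMF.bernoulli p.toNNReal (by simpa using ENNReal.toNNReal_mono ENNReal.one_ne_top hp1)).toMeasure) :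
    (∀ k : ℕ, μ {f | k ≤ bunchCard f} ≤ (1 - p) ^ k) ∧
    (∫⁻ f, (bunchCard f : ℝ≥0∞) ∂μ ≤ p⁻¹) ∧
    1 - (n : ℝ≥0∞) ^ (-c) ≤ μ {f | (bunchCard f : ℝ) ≤ c / p.toReal * Real.log n} := by
  obtain rfl : bunchCard = fun f => #(bunch ws f) := funext hbunch
  have hp_ne_top : p ≠ ∞ := ne_top_of_le_ne_top ENNReal.one_ne_top hp1
  have htail (k : ℕ) : μ {f | k ≤ #(bunch ws f)} ≤ (1 - p) ^ k := by
    have := pi_bernoulli_le_card_bunch_le hws p.toNNReal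
      (by simpa using ENNReal.toNNReal_mono ENNReal.one_ne_top hp1) k
    rwa [ENNReal.coe_toNNReal hp_ne_top, ← hμ] at this
  have : IsProbabilityMeasure μ := hμ ▸ inferInstance
  refine ⟨htail, lintegral_natCast_le_inv_of_tail_le_geometric .of_discrete hp1 htail, ?_⟩
  have hn_pos : (0 : ℝ) < n := by exact_mod_cast (by omega : 0 < n)
  have hp_toReal : p.toReal ≠ 0 := (ENNReal.toReal_pos hp0.ne' hp_ne_top).ne'
  set T := c / p.toReal * Real.log n
  have hupper : μ {f | T < #(bunch ws f)} ≤ (n : ℝ≥0∞) ^ (-c) :=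
    calc μ {f | T < #(bunch ws f)} ≤ μ {f | T ≤ #(bunch ws f)} :=
          measure_mono (Set.setOf_subset_setOf.2 fun _ => le_of_lt)
      _ ≤ ENNReal.ofReal (Real.exp (-(p.toReal * T))) :=
        measure_le_le_ofReal_exp_of_tail_le_geometric hp1 htail T
      _ = (n : ℝ≥0∞) ^ (-c) := by
        rw [show p.toReal * T = c * Real.log n by simp only [T]; field_simp,
          ENNReal.ofReal_exp_neg_mul_log hn_pos, ENNReal.ofReal_natCast]
  calc 1 - (n : ℝ≥0∞) ^ (-c) ≤ 1 - μ {f | T < #(bunch ws f)} := tsub_le_tsub_left hupper 1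
    _ = μ {f | (#(bunch ws f) : ℝ) ≤ T} := by
      rw [← prob_compl_eq_one_sub .of_discrete]
      simp only [Set.compl_setOf, not_lt]
end
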